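/- Let k ∈ ℝ, h > 0, I_m ∈ ℂ, and let G : ℝ → ℂ be twice continuously differentiable on the interval [-h, h]. Define the sinusoidal current I(l) = I_m · sin(k·(h − |l|)). Then ∫_{-h}^{h} I(l) · (G''(l) + k²·G(l)) dl = k·I_m · (G(h) + G(-h) − 2·cos(k·h)·G(0)). -/

import Mathlib

/-!
On each half of the dipole the current is a smooth solution of `u'' + k² u = 0`, so Lagrange's
identity `u (G'' + k² G) = (u G' - u' G)'` turns each half-integral into boundary terms. The
current vanishes at `±h`, leaving `k I_m G(±h)`, while at the feed point the `G'(0)` terms of the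
two halves cancel because `I` is continuous there, and the `G(0)` terms add up because `I'` jumps.
-/

open Set intervalIntegral

theorem integral_mul_helmholtz_eq_sub {k a b : ℝ} (hab : a ≤ b) {u u' G G' G'' : ℝ → ℂ}
    (hu : ∀ x, HasDerivAt u (u' x) x) (hu' : ∀ x, HasDerivAt u' (-(k : ℂ) ^ 2 * u x) x)
    (hG : ∀ x ∈ Icc a b, HasDerivWithinAt G (G' x) (Icc a b) x)
    (hG' : ∀ x ∈ Icc a b, HasDerivWithinAt G' (G'' x) (Icc a b) x)
    (hG'' : ContinuousOn G'' (Icc a b)) :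
    ∫ x in a..b, u x * (G'' x + (k : ℂ) ^ 2 * G x) =
      (u b * G' b - u' b * G b) - (u a * G' a - u' a * G a) := by
  have hu_cont : Continuous u := continuous_iff_continuousAt.2 fun x => (hu x).continuousAt
  have hu'_cont : Continuous u' := continuous_iff_continuousAt.2 fun x => (hu' x).continuousAt
  have hG_cont : ContinuousOn G (Icc a b) := fun x hx => (hG x hx).continuousWithinAt
  have hG'_cont : ContinuousOn G' (Icc a b) := fun x hx => (hG' x hx).continuousWithinAt
  apply integral_eq_sub_of_hasDerivAt_of_le (f := fun x => u x * G' x - u' x * G x) hab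
  · exact (hu_cont.continuousOn.mul hG'_cont).sub (hu'_cont.continuousOn.mul hG_cont)
  · intro x hx
    have hIcc : Icc a b ∈ nhds x := Icc_mem_nhds hx.1 hx.2
    have hGx := (hG x (Ioo_subset_Icc_self hx)).hasDerivAt hIcc
    have hG'x := (hG' x (Ioo_subset_Icc_self hx)).hasDerivAt hIcc
    exact (((hu x).mul hG'x).sub ((hu' x).mul hGx)).congr_deriv (by ring)
  · exact (hu_cont.continuousOn.mul
      (hG''.add (continuousOn_const.mul hG_cont))).intervalIntegrable_of_Icc hab

theorem hasDerivAt_ofReal_sin_affine (ω φ x : ℝ) :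
    HasDerivAt (fun x : ℝ => (Real.sin (ω * x + φ) : ℂ)) (ω * Real.cos (ω * x + φ)) x := by
  have h := (((hasDerivAt_id x).const_mul ω).add_const φ).sin.ofReal_comp
  simpa [mul_comm] using h

theorem hasDerivAt_ofReal_cos_affine (ω φ x : ℝ) :
    HasDerivAt (fun x : ℝ => (Real.cos (ω * x + φ) : ℂ)) (-ω * Real.sin (ω * x + φ)) x := by
  have h := (((hasDerivAt_id x).const_mul ω).add_const φ).cos.ofReal_comp
  simpa [mul_comm] using h

theorem integral_sin_mul_helmholtz_eq_sub {k ω φ a b : ℝ} (hω : ω ^ 2 = k ^ 2) (hab : a ≤ b)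
    (c : ℂ) {G G' G'' : ℝ → ℂ}
    (hG : ∀ x ∈ Icc a b, HasDerivWithinAt G (G' x) (Icc a b) x)
    (hG' : ∀ x ∈ Icc a b, HasDerivWithinAt G' (G'' x) (Icc a b) x)
    (hG'' : ContinuousOn G'' (Icc a b)) :
    ∫ x in a..b, c * Real.sin (ω * x + φ) * (G'' x + (k : ℂ) ^ 2 * G x) =
      (c * Real.sin (ω * b + φ) * G' b - c * ω * Real.cos (ω * b + φ) * G b) -
        (c * Real.sin (ω * a + φ) * G' a - c * ω * Real.cos (ω * a + φ) * G a) := by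
  refine integral_mul_helmholtz_eq_sub (u := fun x => c * Real.sin (ω * x + φ))
    (u' := fun x => c * ω * Real.cos (ω * x + φ)) hab (fun x => ?_) (fun x => ?_) hG hG' hG''
  · simpa [mul_assoc] using (hasDerivAt_ofReal_sin_affine ω φ x).const_mul c
  · have hωc : (ω : ℂ) ^ 2 = (k : ℂ) ^ 2 := by exact_mod_cast hω
    exact ((hasDerivAt_ofReal_cos_affine ω φ x).const_mul (c * ω)).congr_deriv
      (by linear_combination -(c * Real.sin (ω * x + φ)) * hωc)

/-- Radiation integral of a sinusoidal dipole current against a twice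
continuously differentiable kernel `G`:
`∫_{-h}^{h} I_m sin(k(h-|l|)) (G''(l) + k² G(l)) dl
  = k I_m (G(h) + G(-h) - 2 cos(kh) G(0))`. -/
theorem stmt_10 (k h : ℝ) (hh : 0 < h) (Im : ℂ) (G G' G'' : ℝ → ℂ)
    (hG : ∀ x ∈ Set.Icc (-h) h, HasDerivWithinAt G (G' x) (Set.Icc (-h) h) x)
    (hG' : ∀ x ∈ Set.Icc (-h) h, HasDerivWithinAt G' (G'' x) (Set.Icc (-h) h) x)
    (hG'' : ContinuousOn G'' (Set.Icc (-h) h)) :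
    ∫ l in (-h)..h, (Im * (Real.sin (k * (h - |l|)) : ℂ)) * (G'' l + (k:ℂ)^2 * G l) =
      (k:ℂ) * Im * (G h + G (-h) - 2 * (Real.cos (k * h) : ℂ) * G 0) := by
  set f := fun l : ℝ => (Im * (Real.sin (k * (h - |l|)) : ℂ)) * (G'' l + (k:ℂ)^2 * G l)
  have hf : ContinuousOn f (Icc (-h) h) :=
    (by fun_prop : Continuous fun l : ℝ => Im * (Real.sin (k * (h - |l|)) : ℂ)).continuousOn.mul
      (hG''.add (continuousOn_const.mul fun x hx => (hG x hx).continuousWithinAt))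
  have hleft : Icc (-h) 0 ⊆ Icc (-h) h := Icc_subset_Icc le_rfl hh.le
  have hright : Icc 0 h ⊆ Icc (-h) h := Icc_subset_Icc (by linarith) le_rfl
  have hL : ∫ l in (-h)..0, f l = ∫ l in (-h)..0,
      Im * Real.sin (k * l + k * h) * (G'' l + (k:ℂ)^2 * G l) :=
    integral_congr fun l hl => by
      rw [uIcc_of_le (by linarith)] at hl
      simp only [f, abs_of_nonpos hl.2]
      ring_nf
  have hR : ∫ l in (0:ℝ)..h, f l = ∫ l in (0:ℝ)..h,
      Im * Real.sin (-k * l + k * h) * (G'' l + (k:ℂ)^2 * G l) :=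
    integral_congr fun l hl => by
      rw [uIcc_of_le hh.le] at hl
      simp only [f, abs_of_nonneg hl.1]
      ring_nf
  rw [← integral_add_adjacent_intervals ((hf.mono hleft).intervalIntegrable_of_Icc (by linarith))
    ((hf.mono hright).intervalIntegrable_of_Icc hh.le), hL, hR,
    integral_sin_mul_helmholtz_eq_sub rfl (by linarith) Im
      (fun x hx => (hG x (hleft hx)).mono hleft) (fun x hx => (hG' x (hleft hx)).mono hleft)
      (hG''.mono hleft),
    integral_sin_mul_helmholtz_eq_sub (neg_sq k) hh.le Im
      (fun x hx => (hG x (hright hx)).mono hright) (fun x hx => (hG' x (hright hx)).mono hright)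
      (hG''.mono hright)]
  simp only [mul_zero, zero_add, mul_neg, neg_mul, neg_add_cancel, Real.sin_zero, Real.cos_zero]
  push_cast
  ring
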